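/- Let m ≥ 4 be an integer, let v_1, …, v_m be real numbers with 0 < v_1 < v_2 < ⋯ < v_m, let A_1, …, A_m be nonnegative real numbers, and let D_1, …, D_{m−1} be real numbers such that D_ℓ ≤ S_{ℓ+1} for every ℓ ∈ [1, m−1] and Σ_{ℓ=h}^{m−1} D_ℓ ≤ S_h for every h ∈ [1, m−1]. Then Σ_{h=1}^{m−1} v_h D_h ≤ c_m* · Σ_{h=1}^{m} v_h A_h. -/

import Mathlib

/-- `csum v i = ∑_{j=1}^{i-1} 2^{j-1} v_{i-j}` (empty sum is 0). -/
noncomputable def csum (v : ℕ → ℝ) (i : ℕ) : ℝ :=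
  ∑ j ∈ Finset.Icc 1 (i - 1), (2 : ℝ) ^ (j - 1) * v (i - j)

/-- `cval v i = c_i = (v_i + csum v i) / (v_{i+1} + csum v i)`. -/
noncomputable def cval (v : ℕ → ℝ) (i : ℕ) : ℝ :=
  (v i + csum v i) / (v (i + 1) + csum v i)

/-- `cstar v m = c_m^* = max_{1 ≤ i ≤ m-1} c_i`. -/
noncomputable def cstar (v : ℕ → ℝ) (m : ℕ) : ℝ :=
  if hne : (Finset.Icc 1 (m - 1)).Nonempty then (Finset.Icc 1 (m - 1)).sup' hne (cval v)
  else 0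

/-- `Sfun A m h = S_h = ∑_{ℓ=h}^{m} A_ℓ`. -/
noncomputable def Sfun (A : ℕ → ℝ) (m h : ℕ) : ℝ := ∑ ℓ ∈ Finset.Icc h m, A ℓ

/-! Weak LP duality. Write `s_i = csum v i`, so that `s_{i+1} = v_i + 2 s_i`, and let `c ∈ [0, 1]`
dominate every `c_i`. Multiply `D_ℓ ≤ S_{ℓ+1}` by `(1 - c) (v_ℓ + s_ℓ) ≥ 0` and
`∑_{k ≥ ℓ} D_k ≤ S_ℓ` by `c (v_ℓ + s_{ℓ-1}) - (v_{ℓ-1} + s_{ℓ-1}) ≥ 0` (by `c v_1` when `ℓ = 1`).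
Adding up, the left sides give exactly `∑ v_ℓ D_ℓ`, and on the right `A_k` gets coefficient `c v_k`
for `k < m` and `v_{m-1} + (1 - c) s_{m-1} ≤ c v_m` for `k = m`. The summation is run as a
downward induction on a potential. -/

open Finset

lemma sum_Icc_eq_add_sum_Icc_succ {M : Type*} [AddCommMonoid M] (f : ℕ → M) {a b : ℕ}
    (hab : a ≤ b) : ∑ i ∈ Icc a b, f i = f a + ∑ i ∈ Icc (a + 1) b, f i := by
  rw [← add_sum_Ioc_eq_sum_Icc hab, Icc_add_one_left_eq_Ioc]

lemma Sfun_eq_add (A : ℕ → ℝ) {m h : ℕ} (hh : h ≤ m) : Sfun A m h = A h + Sfun A m (h + 1) :=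
  sum_Icc_eq_add_sum_Icc_succ A hh

lemma pos_on_Icc_of_le_succ {v : ℕ → ℝ} {m : ℕ} (hv1 : 0 < v 1)
    (hv : ∀ i, 1 ≤ i → i < m → v i ≤ v (i + 1)) : ∀ i ∈ Icc 1 m, 0 < v i := by
  simp only [mem_Icc, and_imp]
  intro i h1 him
  induction i, h1 using Nat.le_induction with
  | base => exact hv1
  | succ i hi ih => exact (ih (by omega)).trans_le (hv i hi (by omega))

section csum

variable (v : ℕ → ℝ)

@[simp] lemma csum_zero : csum v 0 = 0 := by simp [csum]

@[simp] lemma csum_one : csum v 1 = 0 := by simp [csum]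

lemma csum_succ_eq_sum_range (n : ℕ) :
    csum v (n + 1) = ∑ k ∈ range n, (2 : ℝ) ^ k * v (n - k) := by
  rw [csum, Nat.add_sub_cancel, ← Ico_add_one_right_eq_Icc, sum_Ico_eq_sum_range]
  refine sum_congr rfl fun k _ => ?_
  congr 2 <;> omega

lemma csum_succ {n : ℕ} (hn : n ≠ 0) : csum v (n + 1) = v n + 2 * csum v n := by
  obtain ⟨k, rfl⟩ := Nat.exists_eq_succ_of_ne_zero hn
  rw [csum_succ_eq_sum_range, csum_succ_eq_sum_range, sum_range_succ', mul_sum]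
  simp only [Nat.succ_sub_succ, pow_succ, pow_zero, one_mul, Nat.sub_zero]
  rw [add_comm]
  congr 1
  exact sum_congr rfl fun i _ => by ring

variable {v}

lemma csum_nonneg {m k : ℕ} (hv : ∀ i ∈ Icc 1 m, 0 ≤ v i) (hk : k ≤ m + 1) : 0 ≤ csum v k :=
  sum_nonneg fun j hj => by
    obtain ⟨h1, h2⟩ := mem_Icc.mp hj
    exact mul_nonneg (by positivity) (hv _ (mem_Icc.mpr ⟨by omega, by omega⟩))

end csum

section Duality

variable {v A D : ℕ → ℝ} {c : ℝ} {n : ℕ}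

/-- `s_{j+1} - (1 + c) s_j` is `v_j + (1 - c) s_j` for `j ≥ 1` and vanishes for `j = 0`, so the
induction reaches `j = 0` without a special case. -/
lemma tail_potential_le (hc : c ≤ 1) (hvs : ∀ ℓ ∈ Icc 1 n, 0 ≤ v ℓ + csum v ℓ)
    (hp : ∀ j ≤ n, csum v (j + 1) - (1 + c) * csum v j ≤ c * v (j + 1))
    (hA : 0 ≤ A (n + 1))
    (hD1 : ∀ ℓ ∈ Icc 1 n, D ℓ ≤ Sfun A (n + 1) (ℓ + 1))
    (hD2 : ∀ h ∈ Icc 1 n, ∑ ℓ ∈ Icc h n, D ℓ ≤ Sfun A (n + 1) h) {j : ℕ} (hj : j ≤ n) :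
    ∑ ℓ ∈ Icc (j + 1) n, v ℓ * D ℓ
        + (csum v (j + 1) - (1 + c) * csum v j)
          * (Sfun A (n + 1) (j + 1) - ∑ ℓ ∈ Icc (j + 1) n, D ℓ)
        + (1 - c) * csum v (j + 1) * ∑ ℓ ∈ Icc (j + 1) n, D ℓ
      ≤ c * ∑ ℓ ∈ Icc (j + 1) (n + 1), v ℓ * A ℓ := by
  induction hj using Nat.decreasingInduction with
  | self =>
    simp only [Icc_self, sum_singleton, Icc_eq_empty_of_lt (Nat.lt_succ_self n), sum_empty, Sfun]
    linear_combination mul_le_mul_of_nonneg_right (hp n le_rfl) hA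
  | of_succ j hj ih =>
    have hj' : j + 1 ≤ n := hj
    have hℓ : j + 1 ∈ Icc 1 n := mem_Icc.mpr ⟨by omega, hj⟩
    have hlam : 0 ≤ (1 - c) * (v (j + 1) + csum v (j + 1)) :=
      mul_nonneg (by linarith) (hvs _ hℓ)
    have hmu : 0 ≤ c * v (j + 1) - (csum v (j + 1) - (1 + c) * csum v j) :=
      sub_nonneg.mpr (hp j hj.le)
    have e1 := mul_le_mul_of_nonneg_left (hD1 _ hℓ) hlam
    have e2 := mul_le_mul_of_nonneg_left (hD2 _ hℓ) hmu
    have hsumvD := sum_Icc_eq_add_sum_Icc_succ (fun ℓ => v ℓ * D ℓ) hj'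
    have hsumD := sum_Icc_eq_add_sum_Icc_succ D hj'
    have hsumvA := sum_Icc_eq_add_sum_Icc_succ (fun ℓ => v ℓ * A ℓ) (Nat.le_succ_of_le hj')
    have hS := Sfun_eq_add A (Nat.le_succ_of_le hj')
    rw [hsumD, hS] at e2
    rw [hsumvD, hsumD, hsumvA, hS]
    rw [csum_succ v (by omega : j + 1 ≠ 0)] at ih
    linear_combination ih + e1 + e2

lemma sum_mul_le_of_cval_le (hv : ∀ i ∈ Icc 1 (n + 1), 0 < v i) (hc0 : 0 ≤ c) (hc1 : c ≤ 1)
    (hcval : ∀ i ∈ Icc 1 n, cval v i ≤ c) (hA : 0 ≤ A (n + 1))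
    (hD1 : ∀ ℓ ∈ Icc 1 n, D ℓ ≤ Sfun A (n + 1) (ℓ + 1))
    (hD2 : ∀ h ∈ Icc 1 n, ∑ ℓ ∈ Icc h n, D ℓ ≤ Sfun A (n + 1) h) :
    ∑ ℓ ∈ Icc 1 n, v ℓ * D ℓ ≤ c * ∑ ℓ ∈ Icc 1 (n + 1), v ℓ * A ℓ := by
  have hcsum : ∀ i ≤ n + 1, 0 ≤ csum v i := fun i hi =>
    csum_nonneg (fun k hk => (hv k hk).le) (by omega)
  have hvs : ∀ ℓ ∈ Icc 1 n, 0 ≤ v ℓ + csum v ℓ := fun ℓ hℓ =>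
    add_nonneg (hv ℓ (by grind)).le (hcsum ℓ (by grind))
  have hp : ∀ j ≤ n, csum v (j + 1) - (1 + c) * csum v j ≤ c * v (j + 1) := by
    intro j hj
    rcases Nat.eq_zero_or_pos j with rfl | hj0
    · simpa using mul_nonneg hc0 (hv 1 (by simp)).le
    · have hden : 0 < v (j + 1) + csum v j :=
        add_pos_of_pos_of_nonneg (hv _ (by grind)) (hcsum j (by omega))
      have h := hcval j (mem_Icc.mpr ⟨hj0, hj⟩)
      rw [cval, div_le_iff₀ hden] at h
      rw [csum_succ v hj0.ne']
      linarith
  simpa using tail_potential_le hc1 hvs hp hA hD1 hD2 (Nat.zero_le n)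

end Duality

lemma cval_le_cstar (v : ℕ → ℝ) {m i : ℕ} (hi : i ∈ Icc 1 (m - 1)) : cval v i ≤ cstar v m := by
  rw [cstar, dif_pos ⟨i, hi⟩]
  exact le_sup' (cval v) hi

lemma cstar_le_one {v : ℕ → ℝ} {m : ℕ} (h : ∀ i ∈ Icc 1 (m - 1), cval v i ≤ 1) :
    cstar v m ≤ 1 := by
  unfold cstar
  split_ifs
  · exact sup'_le _ _ h
  · exact zero_le_one

/-- Let `m ≥ 4`, let `0 < v 1 < ⋯ < v m`, let `A_1, …, A_m` be nonnegative reals, and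
let `D_1, …, D_{m-1}` be reals with `D_ℓ ≤ S_{ℓ+1}` for every `ℓ ∈ [1, m-1]` and
`∑_{ℓ=h}^{m-1} D_ℓ ≤ S_h` for every `h ∈ [1, m-1]`. Then
`∑_{h=1}^{m-1} v_h D_h ≤ c_m^* ∑_{h=1}^{m} v_h A_h`. -/
theorem stmt8 (m : ℕ) (hm : 4 ≤ m) (v : ℕ → ℝ)
    (hv1 : 0 < v 1) (hv : ∀ i, 1 ≤ i → i < m → v i < v (i + 1))
    (A : ℕ → ℝ) (hA : ∀ i ∈ Finset.Icc 1 m, 0 ≤ A i) (D : ℕ → ℝ)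
    (hD1 : ∀ ℓ ∈ Finset.Icc 1 (m - 1), D ℓ ≤ Sfun A m (ℓ + 1))
    (hD2 : ∀ h ∈ Finset.Icc 1 (m - 1), ∑ ℓ ∈ Finset.Icc h (m - 1), D ℓ ≤ Sfun A m h) :
    ∑ h ∈ Finset.Icc 1 (m - 1), v h * D h ≤
      cstar v m * ∑ h ∈ Finset.Icc 1 m, v h * A h := by
  obtain ⟨n, rfl⟩ : ∃ n, m = n + 1 := ⟨m - 1, by omega⟩
  rw [Nat.add_sub_cancel] at hD1 hD2 ⊢
  have hpos := pos_on_Icc_of_le_succ hv1 fun i h1 h2 => (hv i h1 h2).le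
  have hden : ∀ i ∈ Icc 1 n, 0 < v (i + 1) + csum v i := fun i hi =>
    add_pos_of_pos_of_nonneg (hpos _ (by grind))
      (csum_nonneg (fun k hk => (hpos k hk).le) (by grind))
  have h1 : 1 ∈ Icc 1 n := mem_Icc.mpr ⟨le_rfl, by omega⟩
  have hc0 : 0 ≤ cstar v (n + 1) :=
    (div_nonneg (by simpa using hv1.le) (hden 1 h1).le).trans (cval_le_cstar v h1)
  have hc1 : cstar v (n + 1) ≤ 1 := cstar_le_one fun i hi =>
    (div_le_one (hden i hi)).mpr (by linarith [hv i (by grind) (by grind)])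
  exact sum_mul_le_of_cval_le hpos hc0 hc1 (fun i hi => cval_le_cstar v hi) (hA _ (by simp))
    hD1 hD2
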